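/- Generalized axiom (AxG): for every nominal i, every node expression φ, and all finite sets Γ,Δ of node expressions of the admissible forms, the sequent @_iφ, Γ ⊢ Δ, @_iφ is provable in G. -/

import Mathlib

namespace HXPathD

mutual
  inductive Path (P N M C : Type) : Type where
    | mod  : M → Path P N M C
    | nom  : N → Path P N M C
    | test : Node P N M C → Path P N M C
    | comp : Path P N M C → Path P N M C → Path P N M C

  inductive Node (P N M C : Type) : Type where
    | prop : P → Node P N M C
    | nom  : N → Node P N M C
    | bot  : Node P N M C
    | impl : Node P N M C → Node P N M C → Node P N M C
    | at   : N → Node P N M C → Node P N M C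
    | dia  : M → Node P N M C → Node P N M C
    | eq   : Path P N M C → C → Path P N M C → Node P N M C
    | neq  : Path P N M C → C → Path P N M C → Node P N M C
end

variable {P N M C : Type}

/-- Abbreviations. -/
def Node.neg (φ : Node P N M C) : Node P N M C := .impl φ .bot
def Node.top : Node P N M C := .impl .bot .bot
def Node.and (φ ψ : Node P N M C) : Node P N M C := .neg (.impl φ (.neg ψ))
def Node.iff (φ ψ : Node P N M C) : Node P N M C := .and (.impl φ ψ) (.impl ψ φ)
def Node.box (a : M) (φ : Node P N M C) : Node P N M C := .neg (.dia a (.neg φ))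
def Path.eps : Path P N M C := .test .top

/-- The node expression ⟨α⟩φ, obtained by the abbreviations
    ⟨j:⟩φ := @_jφ, ⟨ψ?⟩φ := ψ∧φ, ⟨αβ⟩φ := ⟨α⟩⟨β⟩φ (with ⟨a⟩φ primitive). -/
def Path.dia : Path P N M C → Node P N M C → Node P N M C
  | .mod a, φ => .dia a φ
  | .nom j, φ => .at j φ
  | .test ψ, φ => .and ψ φ
  | .comp α β, φ => α.dia (β.dia φ)

/-- A comparison ▲ ∈ {=_c, ≠_c : c ∈ Cmp}. -/
inductive Comparison (C : Type) : Type where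
  | ceq  : C → Comparison C
  | cneq : C → Comparison C

/-- The node expression ⟨α ▲ β⟩. -/
def Comparison.node : Comparison C → Path P N M C → Path P N M C → Node P N M C
  | .ceq c, α, β => .eq α c β
  | .cneq c, α, β => .neq α c β

/-- A hybrid data model. -/
structure Model (P N M C : Type) where
  W : Type
  nonempty : Nonempty W
  R : M → W → W → Prop
  E : C → W → W → Prop
  E_equiv : ∀ c, Equivalence (E c)
  g : N → W
  V : P → W → Prop

mutual
  def Model.satPath (𝔐 : Model P N M C) : Path P N M C → 𝔐.W → 𝔐.W → Prop
    | .mod a, n, n' => 𝔐.R a n n'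
    | .nom i, _, n' => 𝔐.g i = n'
    | .test φ, n, n' => n = n' ∧ 𝔐.sat φ n
    | .comp α β, n, n' => ∃ n'', 𝔐.satPath α n n'' ∧ 𝔐.satPath β n'' n'

  def Model.sat (𝔐 : Model P N M C) : Node P N M C → 𝔐.W → Prop
    | .prop p, n => 𝔐.V p n
    | .nom i, n => 𝔐.g i = n
    | .bot, _ => False
    | .impl φ ψ, n => 𝔐.sat φ n → 𝔐.sat ψ n
    | .at i φ, _ => 𝔐.sat φ (𝔐.g i)
    | .dia a φ, n => ∃ n', 𝔐.R a n n' ∧ 𝔐.sat φ n'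
    | .eq α c β, n => ∃ n' n'', 𝔐.satPath α n n' ∧ 𝔐.satPath β n n'' ∧ 𝔐.E c n' n''
    | .neq α c β, n => ∃ n' n'', 𝔐.satPath α n n' ∧ 𝔐.satPath β n n'' ∧ ¬ 𝔐.E c n' n''
end

mutual
  def Path.noms : Path P N M C → Set N
    | .mod _ => ∅
    | .nom i => {i}
    | .test φ => φ.noms
    | .comp α β => α.noms ∪ β.noms

  def Node.noms : Node P N M C → Set N
    | .prop _ => ∅
    | .nom i => {i}
    | .bot => ∅
    | .impl φ ψ => φ.noms ∪ ψ.noms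
    | .at i φ => insert i φ.noms
    | .dia _ φ => φ.noms
    | .eq α _ β => α.noms ∪ β.noms
    | .neq α _ β => α.noms ∪ β.noms
end

/-- Node expressions of the admissible forms for sequents:
    ⟨i: ▲ j:⟩ or @_iφ. -/
def Node.Admissible : Node P N M C → Prop
  | .at _ _ => True
  | .eq (.nom _) _ (.nom _) => True
  | .neq (.nom _) _ (.nom _) => True
  | _ => False

/-- A sequent: antecedent and consequent. -/
abbrev Sequent (P N M C : Type) := Set (Node P N M C) × Set (Node P N M C)

/-- The nominal `j` does not occur in the set `S`. -/
def FreshIn (j : N) (S : Set (Node P N M C)) : Prop := ∀ φ ∈ S, j ∉ φ.noms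

/-- Shape restriction on the axiom (Ax). -/
inductive AxForm : Node P N M C → Prop where
  | prop (i : N) (p : P) : AxForm (.at i (.prop p))
  | nom (i j : N) : AxForm (.at i (.nom j))
  | eq (i : N) (c : C) (j : N) : AxForm (.eq (.nom i) c (.nom j))

/-- Shape restriction on the rule (S1): φ is p, ⊥ or ⟨a⟩k. -/
inductive S1Form : Node P N M C → Prop where
  | prop (p : P) : S1Form (.prop p)
  | bot : S1Form .bot
  | dia (a : M) (k : N) : S1Form (.dia a (.nom k))

/-- One rule instance of the sequent calculus G: `Step cut prems concl` holds iff
    `concl` may be inferred from the premisses `prems` by a rule of G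
    (when `cut = false`, the rule (Cut) is excluded). -/
inductive Step (cut : Bool) : List (Sequent P N M C) → Sequent P N M C → Prop where
  | ax {Γ Δ : Set (Node P N M C)} {φ} (h : AxForm φ) :
      Step cut [] (insert φ Γ, insert φ Δ)
  | bot {Γ Δ : Set (Node P N M C)} (i : N) :
      Step cut [] (insert (.at i .bot) Γ, Δ)
  | implL {Γ Δ : Set (Node P N M C)} (i : N) (φ ψ : Node P N M C) :
      Step cut [(Γ, insert (.at i φ) Δ), (insert (.at i ψ) Γ, Δ)]
        (insert (.at i (.impl φ ψ)) Γ, Δ)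
  | implR {Γ Δ : Set (Node P N M C)} (i : N) (φ ψ : Node P N M C) :
      Step cut [(insert (.at i φ) Γ, insert (.at i ψ) Δ)]
        (Γ, insert (.at i (.impl φ ψ)) Δ)
  | atT {Γ Δ : Set (Node P N M C)} (i : N) :
      Step cut [(insert (.at i (.nom i)) Γ, Δ)] (Γ, Δ)
  | at5 {Γ Δ : Set (Node P N M C)} (i j k : N) :
      Step cut
        [(insert (.at j (.nom k)) (insert (.at i (.nom j)) (insert (.at i (.nom k)) Γ)), Δ)]
        (insert (.at i (.nom j)) (insert (.at i (.nom k)) Γ), Δ)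
  | nomRule {Γ Δ : Set (Node P N M C)} (i j : N)
      (hj : FreshIn j Γ) (hj' : FreshIn j Δ) :
      Step cut [(insert (.at i (.nom j)) Γ, Δ)] (Γ, Δ)
  | s1 {Γ Δ : Set (Node P N M C)} (i j : N) {φ : Node P N M C} (h : S1Form φ) :
      Step cut
        [(insert (.at j φ) (insert (.at i (.nom j)) (insert (.at i φ) Γ)), Δ)]
        (insert (.at i (.nom j)) (insert (.at i φ) Γ), Δ)
  | s2 {Γ Δ : Set (Node P N M C)} (i j k : N) (a : M) :
      Step cut
        [(insert (.at i (.dia a (.nom k)))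
            (insert (.at j (.nom k)) (insert (.at i (.dia a (.nom j))) Γ)), Δ)]
        (insert (.at j (.nom k)) (insert (.at i (.dia a (.nom j))) Γ), Δ)
  | s3 {Γ Δ : Set (Node P N M C)} (i j k : N) (c : C) :
      Step cut
        [(insert (.eq (.nom j) c (.nom k))
            (insert (.at i (.nom j)) (insert (.eq (.nom i) c (.nom k)) Γ)), Δ)]
        (insert (.at i (.nom j)) (insert (.eq (.nom i) c (.nom k)) Γ), Δ)
  | atL {Γ Δ : Set (Node P N M C)} (i j : N) (φ : Node P N M C) :
      Step cut [(insert (.at i φ) Γ, Δ)] (insert (.at j (.at i φ)) Γ, Δ)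
  | atR {Γ Δ : Set (Node P N M C)} (i j : N) (φ : Node P N M C) :
      Step cut [(Γ, insert (.at i φ) Δ)] (Γ, insert (.at j (.at i φ)) Δ)
  | diaL {Γ Δ : Set (Node P N M C)} (i j : N) (a : M) (φ : Node P N M C)
      (hj : FreshIn j (insert (.at i (.dia a φ)) Γ)) (hj' : FreshIn j Δ) :
      Step cut
        [(insert (.at i (.dia a (.nom j))) (insert (.at j φ) Γ), Δ)]
        (insert (.at i (.dia a φ)) Γ, Δ)
  | diaR {Γ Δ : Set (Node P N M C)} (i j : N) (a : M) (φ : Node P N M C) :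
      Step cut
        [(insert (.at i (.dia a (.nom j))) Γ,
          insert (.at i (.dia a φ)) (insert (.at j φ) Δ))]
        (insert (.at i (.dia a (.nom j))) Γ, insert (.at i (.dia a φ)) Δ)
  | cmpL {Γ Δ : Set (Node P N M C)} (i j k : N) (α β : Path P N M C)
      (b : Comparison C) (hjk : j ≠ k)
      (hj : FreshIn j (insert (.at i (b.node α β)) Γ)) (hj' : FreshIn j Δ)
      (hk : FreshIn k (insert (.at i (b.node α β)) Γ)) (hk' : FreshIn k Δ) :
      Step cut
        [(insert (.at i (α.dia (.nom j)))
            (insert (.at i (β.dia (.nom k)))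
              (insert (b.node (.nom j) (.nom k)) Γ)), Δ)]
        (insert (.at i (b.node α β)) Γ, Δ)
  | cmpR {Γ Δ : Set (Node P N M C)} (i j k : N) (α β : Path P N M C)
      (b : Comparison C) :
      Step cut
        [(insert (.at i (α.dia (.nom j))) (insert (.at i (β.dia (.nom k))) Γ),
          insert (.at i (b.node α β)) (insert (b.node (.nom j) (.nom k)) Δ))]
        (insert (.at i (α.dia (.nom j))) (insert (.at i (β.dia (.nom k))) Γ),
          insert (.at i (b.node α β)) Δ)
  | eqT {Γ Δ : Set (Node P N M C)} (i : N) (c : C) :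
      Step cut [(insert (.eq (.nom i) c (.nom i)) Γ, Δ)] (Γ, Δ)
  | eq5 {Γ Δ : Set (Node P N M C)} (i j k : N) (c : C) :
      Step cut
        [(insert (.eq (.nom j) c (.nom k))
            (insert (.eq (.nom i) c (.nom j)) (insert (.eq (.nom i) c (.nom k)) Γ)), Δ)]
        (insert (.eq (.nom i) c (.nom j)) (insert (.eq (.nom i) c (.nom k)) Γ), Δ)
  | neqL {Γ Δ : Set (Node P N M C)} (i j : N) (c : C) :
      Step cut [(Γ, insert (.eq (.nom i) c (.nom j)) Δ)]
        (insert (.neq (.nom i) c (.nom j)) Γ, Δ)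
  | neqR {Γ Δ : Set (Node P N M C)} (i j : N) (c : C) :
      Step cut [(insert (.eq (.nom i) c (.nom j)) Γ, Δ)]
        (Γ, insert (.neq (.nom i) c (.nom j)) Δ)
  | cutRule {Γ Δ Γ' Δ' : Set (Node P N M C)} (φ : Node P N M C)
      (ha : φ.Admissible) (hc : cut = true) :
      Step cut [(Γ, insert φ Δ), (insert φ Γ', Δ')] (Γ ∪ Γ', Δ ∪ Δ')
  | wl {Γ Δ : Set (Node P N M C)} (φ : Node P N M C) (ha : φ.Admissible) :
      Step cut [(Γ, Δ)] (insert φ Γ, Δ)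
  | wr {Γ Δ : Set (Node P N M C)} (φ : Node P N M C) (ha : φ.Admissible) :
      Step cut [(Γ, Δ)] (Γ, insert φ Δ)

/-- Derivability in G (`Deriv true`) resp. in G without (Cut) (`Deriv false`):
    a derivation built from the rules whose leaves are instances of the
    zero-premiss rules (Ax) or (⊥). -/
inductive Deriv (cut : Bool) : Sequent P N M C → Prop where
  | step {prems : List (Sequent P N M C)} {concl : Sequent P N M C}
      (h : Step cut prems concl) (ih : ∀ s ∈ prems, Deriv cut s) : Deriv cut concl

/-- Γ ⊢_G Δ : the sequent is provable in G. -/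
def ProvableG (Γ Δ : Set (Node P N M C)) : Prop := Deriv true (Γ, Δ)

/-- M ⊩ φ : global satisfaction. -/
def Model.satG (𝔐 : Model P N M C) (φ : Node P N M C) : Prop := ∀ n, 𝔐.sat φ n

/-- Validity of a sequent. -/
def ValidSeq (S : Sequent P N M C) : Prop :=
  ∀ 𝔐 : Model P N M C, (∀ γ ∈ S.1, 𝔐.satG γ) → ∃ δ ∈ S.2, 𝔐.satG δ

/-- Formulas of the basic hybrid logic H(@): no data comparisons. -/
def Node.IsHybrid : Node P N M C → Prop
  | .prop _ => True
  | .nom _ => True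
  | .bot => True
  | .impl φ ψ => φ.IsHybrid ∧ ψ.IsHybrid
  | .at _ φ => φ.IsHybrid
  | .dia _ φ => φ.IsHybrid
  | .eq _ _ _ => False
  | .neq _ _ _ => False

/-!
The derivation is cut-free and goes by structural induction on `φ`. Each connective is
decomposed by its left and right rule, which leaves instances of the claim for the immediate
subformulas (at a fresh nominal in the case of `⟨a⟩`). A comparison `⟨α ▲ β⟩` needs no
induction: (⟨▲⟩L) with fresh `j, k` followed by (⟨▲⟩R) with the same `j, k` puts
`⟨j: ▲ k:⟩` on both sides, which (Ax) closes, after (NEqL) and (NEqR) when `▲` is `≠_c`.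
-/

mutual
  theorem Path.noms_finite : ∀ α : Path P N M C, α.noms.Finite
    | .mod _ => by simp [Path.noms]
    | .nom _ => by simp [Path.noms]
    | .test φ => by simpa [Path.noms] using φ.noms_finite
    | .comp α β => by simpa [Path.noms] using α.noms_finite.union β.noms_finite

  theorem Node.noms_finite : ∀ φ : Node P N M C, φ.noms.Finite
    | .prop _ | .bot => by simp [Node.noms]
    | .nom _ => by simp [Node.noms]
    | .impl φ ψ => by simpa [Node.noms] using φ.noms_finite.union ψ.noms_finite
    | .at _ φ => by simpa [Node.noms] using φ.noms_finite
    | .dia _ φ => by simpa [Node.noms] using φ.noms_finite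
    | .eq α _ β | .neq α _ β => by simpa [Node.noms] using α.noms_finite.union β.noms_finite
end

theorem FreshIn.mono {j : N} {S T : Set (Node P N M C)} (h : FreshIn j T) (hST : S ⊆ T) :
    FreshIn j S :=
  fun φ hφ => h φ (hST hφ)

theorem exists_freshIn [Infinite N] {S : Set (Node P N M C)} (hS : S.Finite) :
    ∃ j : N, FreshIn j S := by
  obtain ⟨j, hj⟩ := (hS.biUnion fun φ _ => φ.noms_finite).infinite_compl.nonempty
  exact ⟨j, fun φ hφ hjφ => hj (Set.mem_biUnion hφ hjφ)⟩

theorem exists_freshIn_ne [Infinite N] {S : Set (Node P N M C)} (hS : S.Finite) (j : N) :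
    ∃ k : N, k ≠ j ∧ FreshIn k S := by
  obtain ⟨k, hk⟩ := exists_freshIn (hS.insert (.nom j))
  refine ⟨k, fun hkj => hk (.nom j) (Set.mem_insert _ _) ?_, hk.mono (Set.subset_insert _ _)⟩
  simp [Node.noms, hkj]

namespace Deriv

variable {cut : Bool}

theorem of_step₀ {s : Sequent P N M C} (h : Step cut [] s) : Deriv cut s :=
  step h (by simp)

theorem of_step₁ {s t : Sequent P N M C} (h : Step cut [s] t) (hs : Deriv cut s) :
    Deriv cut t :=
  step h (by simpa using hs)

theorem of_step₂ {s₁ s₂ t : Sequent P N M C} (h : Step cut [s₁, s₂] t)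
    (hs₁ : Deriv cut s₁) (hs₂ : Deriv cut s₂) : Deriv cut t :=
  step h (by simp [hs₁, hs₂])

theorem cmp_nom_self (b : Comparison C) (j k : N) (Γ Δ : Set (Node P N M C)) :
    Deriv cut (insert (b.node (.nom j) (.nom k)) Γ, insert (b.node (.nom j) (.nom k)) Δ) := by
  cases b with
  | ceq c => exact of_step₀ (.ax (.eq j c k))
  | cneq c =>
    refine of_step₁ (.neqL j k c) ?_
    rw [Set.insert_comm]
    exact of_step₁ (.neqR j k c) (of_step₀ (.ax (.eq j c k)))

theorem at_cmp_self [Infinite N] (i : N) (b : Comparison C) (α β : Path P N M C)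
    {Γ Δ : Set (Node P N M C)} (hΓ : Γ.Finite) (hΔ : Δ.Finite) :
    Deriv cut (insert (.at i (b.node α β)) Γ, insert (.at i (b.node α β)) Δ) := by
  set E : Node P N M C := .at i (b.node α β)
  have hfin : (insert E (Γ ∪ Δ)).Finite := (hΓ.union hΔ).insert E
  obtain ⟨j, hj⟩ := exists_freshIn hfin
  obtain ⟨k, hkj, hk⟩ := exists_freshIn_ne hfin j
  have hL : insert E Γ ⊆ insert E (Γ ∪ Δ) := Set.insert_subset_insert Set.subset_union_left
  have hR : insert E Δ ⊆ insert E (Γ ∪ Δ) := Set.insert_subset_insert Set.subset_union_right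
  refine of_step₁ (.cmpL i j k α β b hkj.symm (hj.mono hL) (hj.mono hR) (hk.mono hL) (hk.mono hR)) ?_
  refine of_step₁ (.cmpR i j k α β b) ?_
  set T : Node P N M C := b.node (.nom j) (.nom k)
  rw [Set.insert_comm _ T Γ, Set.insert_comm _ T, Set.insert_comm E]
  exact cmp_nom_self b j k _ _

theorem at_self [Infinite N] (i : N) (φ : Node P N M C) {Γ Δ : Set (Node P N M C)}
    (hΓ : Γ.Finite) (hΔ : Δ.Finite) :
    Deriv cut (insert (.at i φ) Γ, insert (.at i φ) Δ) := by
  match φ with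
  | .prop p => exact of_step₀ (.ax (.prop i p))
  | .nom j => exact of_step₀ (.ax (.nom i j))
  | .bot => exact of_step₀ (.bot i)
  | .eq α c β => exact at_cmp_self i (.ceq c) α β hΓ hΔ
  | .neq α c β => exact at_cmp_self i (.cneq c) α β hΓ hΔ
  | .impl φ ψ =>
    refine of_step₁ (.implR i φ ψ) ?_
    rw [Set.insert_comm]
    exact of_step₂ (.implL i φ ψ) (at_self i φ hΓ (hΔ.insert _)) (at_self i ψ (hΓ.insert _) hΔ)
  | .at j ψ => exact of_step₁ (.atR j i ψ) (of_step₁ (.atL j i ψ) (at_self j ψ hΓ hΔ))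
  | .dia a ψ =>
    set D : Node P N M C := .at i (.dia a ψ)
    have hfin : (insert D (Γ ∪ Δ)).Finite := (hΓ.union hΔ).insert D
    obtain ⟨j, hj⟩ := exists_freshIn hfin
    refine of_step₁ (.diaL i j a ψ (hj.mono (Set.insert_subset_insert Set.subset_union_left))
      (hj.mono (Set.insert_subset_insert Set.subset_union_right))) ?_
    refine of_step₁ (.diaR i j a ψ) ?_
    rw [Set.insert_comm _ (.at j ψ) Γ, Set.insert_comm D]
    exact at_self j ψ (hΓ.insert _) (hΔ.insert _)
termination_by structural φ

end Deriv

/-- generalized axiom (AxG). -/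
theorem axG {P N M C : Type} [Countable P] [Infinite P] [Countable N] [Infinite N] [Finite M] [Finite C]
    (i : N) (φ : Node P N M C) {Γ Δ : Set (Node P N M C)}
    (hGfin : Γ.Finite) (hDfin : Δ.Finite)
    (hGadm : ∀ ψ ∈ Γ, ψ.Admissible) (hDadm : ∀ ψ ∈ Δ, ψ.Admissible) :
    ProvableG (insert (.at i φ) Γ) (insert (.at i φ) Δ) :=
  Deriv.at_self i φ hGfin hDfin

end HXPathD
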